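/- Let 0 < ρ < 1, x* = ρ/(1−ρ), and for n, m ∈ ℕ define E_m(n) = (1−ρ)^{m+1}·ρ^n·∏_{k=1}^{n} (1 + m/k). Then for every fixed r ∈ ℝ, with n_A = ⌊A·x* + r·√A⌋ for A ∈ ℕ, one has lim_{A→∞} √(2πA)·E_A(n_A) = ((1−ρ)/√ρ)·exp( −(1−ρ)²·r²/(2ρ) ); that is, the occupancy of the processor-sharing queue with A permanent customers satisfies a Gaussian local limit theorem around A·x* with variance A·ρ/(1−ρ)². -/

import Mathlib

noncomputable section

open Real Filter Set Topology

/-- Stationary probability of `n` customers in the single-server PS queue with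
`m` permanent customers: `E_m(n) = (1−ρ)^{m+1} ρ^n ∏_{k=1}^n (1 + m/k)`. -/
def Estat (ρ : ℝ) (m n : ℕ) : ℝ :=
  (1 - ρ) ^ (m + 1) * ρ ^ n * ∏ k ∈ Finset.Icc 1 n, (1 + (m : ℝ) / k)

/-!
Since `∏_{k=1}^n (1 + m/k) = C(n+m, n)`, Stirling's formula for the three factorials gives the
exact identity
`√(2πm) E_m(n) = √π S(n+m) / (S(n) S(m)) · √(1 + m/n) · (1-ρ) · exp(m φ(n/m))`,
where `S = stirlingSeq → √π` and `φ(x) = x log ρ + log(1-ρ) + (1+x) log(1+x) - x log x`.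
The exponent `φ` vanishes together with its derivative at `x* = ρ/(1-ρ)`, and
`φ''(x*) = -(1-ρ)²/ρ`. Along `n_A = A x* + (r + o(1)) √A` this second-order expansion gives
`A φ(n_A/A) → -(1-ρ)² r²/(2ρ)`, while `√(1 + A/n_A) → √(1 + 1/x*) = 1/√ρ`.
-/

open scoped Nat
open Asymptotics Stirling

lemma prod_Icc_one_add_div_eq_choose (m n : ℕ) :
    ∏ k ∈ Finset.Icc 1 n, (1 + (m : ℝ) / k) = (n + m).choose n := by
  induction n with
  | zero => simp
  | succ n ih =>
    have h := Nat.add_one_mul_choose_eq (n + m) n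
    rw [← Nat.cast_inj (R := ℝ)] at h
    rw [Finset.prod_Icc_succ_top (Nat.le_add_left 1 n), ih, show n + 1 + m = n + m + 1 by omega]
    push_cast at h ⊢
    field_simp
    linarith

lemma factorial_eq_stirlingSeq_mul {n : ℕ} (hn : n ≠ 0) :
    (n ! : ℝ) = stirlingSeq n * (√(2 * n) * (n / exp 1) ^ n) := by
  rw [stirlingSeq, div_mul_cancel₀]
  positivity

lemma sqrt_two_pi_mul_choose {m n : ℕ} (hm : m ≠ 0) (hn : n ≠ 0) :
    √(2 * π * m) * (n + m).choose n =
      √π * (stirlingSeq (n + m) / (stirlingSeq n * stirlingSeq m)) * √(1 + (n / m : ℝ)⁻¹) *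
        ((n + m : ℝ) ^ (n + m) / (n ^ n * m ^ m)) := by
  have hSpos : ∀ {k : ℕ}, k ≠ 0 → 0 < stirlingSeq k := fun hk => by
    rw [stirlingSeq]; have := Nat.pos_of_ne_zero hk; positivity
  have hm' : (0 : ℝ) < m := by positivity
  have hn' : (0 : ℝ) < n := by positivity
  rw [Nat.cast_choose ℝ (Nat.le_add_right n m), Nat.add_sub_cancel_left,
    factorial_eq_stirlingSeq_mul hm, factorial_eq_stirlingSeq_mul hn,
    factorial_eq_stirlingSeq_mul (by omega : n + m ≠ 0), inv_div,
    show (1 + m / n : ℝ) = (n + m) / n by field_simp]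
  have := hSpos hm
  have := hSpos hn
  have := hSpos (by omega : n + m ≠ 0)
  push_cast
  simp only [sqrt_mul' _ hm'.le, sqrt_mul' _ hn'.le,
    sqrt_mul' _ (by positivity : (0 : ℝ) ≤ n + m), sqrt_div' _ hn'.le, sqrt_mul zero_le_two,
    div_pow, pow_add]
  field_simp

def largeDevExponent (ρ x : ℝ) : ℝ :=
  x * log ρ + log (1 - ρ) + (1 + x) * log (1 + x) - x * log x

lemma exp_mul_largeDevExponent {ρ : ℝ} (hρ0 : 0 < ρ) (hρ1 : ρ < 1) {m n : ℕ} (hm : m ≠ 0)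
    (hn : n ≠ 0) :
    exp (m * largeDevExponent ρ (n / m)) =
      (1 - ρ) ^ m * ρ ^ n * ((n + m : ℝ) ^ (n + m) / (n ^ n * m ^ m)) := by
  have hm' : (0 : ℝ) < m := by positivity
  have hn' : (0 : ℝ) < n := by positivity
  have hlog : m * largeDevExponent ρ (n / m) =
      n * log ρ + m * log (1 - ρ) + (n + m : ℕ) * log (n + m) - n * log n - m * log m := by
    rw [largeDevExponent, show 1 + (n / m : ℝ) = (n + m) / m by field_simp; ring,
      log_div (by positivity) hm'.ne', log_div hn'.ne' hm'.ne']
    push_cast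
    field_simp
    ring
  rw [hlog, exp_sub, exp_sub, exp_add, exp_add]
  simp only [exp_nat_mul, exp_log hρ0, exp_log (sub_pos.2 hρ1), exp_log hm', exp_log hn',
    exp_log (by positivity : (0 : ℝ) < n + m)]
  field_simp

lemma sqrt_two_pi_mul_Estat {ρ : ℝ} (hρ0 : 0 < ρ) (hρ1 : ρ < 1) {m n : ℕ} (hm : m ≠ 0)
    (hn : n ≠ 0) :
    √(2 * π * m) * Estat ρ m n =
      √π * (stirlingSeq (n + m) / (stirlingSeq n * stirlingSeq m)) * √(1 + (n / m : ℝ)⁻¹) *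
        (1 - ρ) * exp (m * largeDevExponent ρ (n / m)) := by
  rw [Estat, prod_Icc_one_add_div_eq_choose, exp_mul_largeDevExponent hρ0 hρ1 hm hn]
  calc _ = (1 - ρ) * (1 - ρ) ^ m * ρ ^ n * (√(2 * π * m) * (n + m).choose n) := by ring
    _ = _ := by rw [sqrt_two_pi_mul_choose hm hn]; ring

lemma isLittleO_sub_half_mul_sq {f f' : ℝ → ℝ} {a c : ℝ}
    (hf : ∀ᶠ x in 𝓝 a, HasDerivAt f (f' x) x) (hf' : HasDerivAt f' c a)
    (hfa : f a = 0) (hf'a : f' a = 0) :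
    (fun x => f x - c / 2 * (x - a) ^ 2) =o[𝓝 a] fun x => (x - a) ^ 2 := by
  have hsq : ∀ {x}, x ≠ a → (x - a) ^ 2 ≠ 0 := fun hx => pow_ne_zero 2 (sub_ne_zero.2 hx)
  have hquot : Tendsto (fun x => f x / (x - a) ^ 2) (𝓝[≠] a) (𝓝 (c / 2)) := by
    refine HasDerivAt.lhopital_zero_nhdsNE (f' := f') (g' := fun x => 2 * (x - a))
      (eventually_nhdsWithin_of_eventually_nhds hf) ?_ ?_ ?_ ?_ ?_
    · exact Eventually.of_forall fun x => by
        simpa using ((hasDerivAt_id' x).sub_const a).fun_pow 2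
    · filter_upwards [self_mem_nhdsWithin] with x hx
      exact mul_ne_zero two_ne_zero (sub_ne_zero.2 hx)
    · simpa [hfa] using hf.self_of_nhds.continuousAt.tendsto.mono_left nhdsWithin_le_nhds
    · simpa using ((by fun_prop : Continuous fun x : ℝ => (x - a) ^ 2).tendsto a).mono_left
        nhdsWithin_le_nhds
    · have hslope := (hasDerivAt_iff_tendsto_slope.1 hf').div_const 2
      refine hslope.congr' ?_
      filter_upwards [self_mem_nhdsWithin] with x hx
      rw [slope_def_field, hf'a, sub_zero, div_div, mul_comm]
  have hne : (fun x => f x - c / 2 * (x - a) ^ 2) =o[𝓝[≠] a] fun x => (x - a) ^ 2 := by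
    rw [isLittleO_iff_tendsto' (by
      filter_upwards [self_mem_nhdsWithin] with x hx h using (hsq hx h).elim)]
    simpa using (hquot.sub_const (c / 2)).congr' (by
      filter_upwards [self_mem_nhdsWithin] with x hx
      rw [sub_div, mul_div_cancel_right₀ _ (hsq hx)])
  simpa using hne.insert (by simp [hfa])

lemma hasDerivAt_largeDevExponent (ρ : ℝ) {x : ℝ} (hx : 0 < x) :
    HasDerivAt (largeDevExponent ρ) (log ρ + log (1 + x) - log x) x := by
  have h1x : HasDerivAt (fun y => 1 + y) 1 x := (hasDerivAt_id' x).const_add 1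
  have := ((((hasDerivAt_id' x).mul_const (log ρ)).add_const (log (1 - ρ))).add
    (h1x.mul (h1x.log (by positivity)))).sub ((hasDerivAt_id' x).mul (hasDerivAt_log hx.ne'))
  refine this.congr_deriv ?_
  field_simp
  ring

lemma hasDerivAt_deriv_largeDevExponent (ρ : ℝ) {x : ℝ} (hx : 0 < x) :
    HasDerivAt (fun x => log ρ + log (1 + x) - log x) ((1 + x)⁻¹ - x⁻¹) x := by
  have h1x : HasDerivAt (fun y => 1 + y) 1 x := (hasDerivAt_id' x).const_add 1
  exact (((h1x.log (by positivity)).const_add (log ρ)).sub (hasDerivAt_log hx.ne')).congr_deriv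
    (by rw [one_div])

lemma one_add_div_one_sub {ρ : ℝ} (hρ1 : ρ < 1) : 1 + ρ / (1 - ρ) = (1 - ρ)⁻¹ := by
  have : 1 - ρ ≠ 0 := (sub_pos.2 hρ1).ne'
  field_simp
  ring

lemma largeDevExponent_div_one_sub {ρ : ℝ} (hρ0 : 0 < ρ) (hρ1 : ρ < 1) :
    largeDevExponent ρ (ρ / (1 - ρ)) = 0 := by
  have : 1 - ρ ≠ 0 := (sub_pos.2 hρ1).ne'
  rw [largeDevExponent, one_add_div_one_sub hρ1, log_inv, log_div hρ0.ne' this]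
  field_simp
  ring

lemma isLittleO_largeDevExponent {ρ : ℝ} (hρ0 : 0 < ρ) (hρ1 : ρ < 1) :
    (fun x => largeDevExponent ρ x - -(1 - ρ) ^ 2 / ρ / 2 * (x - ρ / (1 - ρ)) ^ 2)
      =o[𝓝 (ρ / (1 - ρ))] fun x => (x - ρ / (1 - ρ)) ^ 2 := by
  have : 1 - ρ ≠ 0 := (sub_pos.2 hρ1).ne'
  have hx : 0 < ρ / (1 - ρ) := div_pos hρ0 (sub_pos.2 hρ1)
  refine isLittleO_sub_half_mul_sq ((eventually_gt_nhds hx).mono fun x hx =>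
    hasDerivAt_largeDevExponent ρ hx) ?_ (largeDevExponent_div_one_sub hρ0 hρ1) ?_
  · convert hasDerivAt_deriv_largeDevExponent ρ hx using 1
    rw [one_add_div_one_sub hρ1]
    field_simp
    ring
  · rw [one_add_div_one_sub hρ1, log_inv, log_div hρ0.ne' this]
    ring

lemma tendsto_div_natCast_of_tendsto_sub_div_sqrt {u : ℕ → ℝ} {a r : ℝ}
    (hu : Tendsto (fun A : ℕ => (u A - A * a) / √A) atTop (𝓝 r)) :
    Tendsto (fun A : ℕ => u A / A) atTop (𝓝 a) := by
  have h := (hu.mul (tendsto_inv_atTop_zero.comp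
    (tendsto_sqrt_atTop.comp tendsto_natCast_atTop_atTop))).const_add a
  rw [mul_zero, add_zero] at h
  refine h.congr' ?_
  filter_upwards [eventually_ne_atTop 0] with A hA
  have hA' : (0 : ℝ) < A := by positivity
  rw [Function.comp_apply, Function.comp_apply, ← div_eq_mul_inv, div_div,
    mul_self_sqrt hA'.le]
  field_simp
  ring

lemma tendsto_natCast_mul_comp_div {f : ℝ → ℝ} {a b r : ℝ}
    (hf : (fun x => f x - b * (x - a) ^ 2) =o[𝓝 a] fun x => (x - a) ^ 2) {u : ℕ → ℝ}
    (hu : Tendsto (fun A : ℕ => (u A - A * a) / √A) atTop (𝓝 r)) :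
    Tendsto (fun A : ℕ => A * f (u A / A)) atTop (𝓝 (b * r ^ 2)) := by
  have hsq : ∀ᶠ A : ℕ in atTop, ((u A - A * a) / √A) ^ 2 = A * (u A / A - a) ^ 2 := by
    filter_upwards [eventually_ne_atTop 0] with A hA
    have hA' : (0 : ℝ) < A := by positivity
    rw [div_pow, sq_sqrt hA'.le]
    field_simp
  -- `A (u A / A - a) ^ 2` converges, so it turns the `o((x - a) ^ 2)` remainder into `o(1)`.
  have hrem : Tendsto (fun A : ℕ => A * (f (u A / A) - b * (u A / A - a) ^ 2)) atTop
      (𝓝 0) := by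
    rw [← isLittleO_one_iff ℝ]
    refine ((isBigO_refl (fun A : ℕ => (A : ℝ)) atTop).mul_isLittleO
      (hf.comp_tendsto (tendsto_div_natCast_of_tendsto_sub_div_sqrt hu))).trans_isBigO ?_
    exact ((hu.pow 2).isBigO_one ℝ).congr' hsq EventuallyEq.rfl
  have h := hrem.add ((hu.pow 2).const_mul b)
  rw [zero_add] at h
  refine h.congr' ?_
  filter_upwards [hsq] with A hA
  rw [hA]
  ring

lemma tendsto_floor_sub_div_sqrt {x : ℝ} (hx : 0 < x) (r : ℝ) :
    Tendsto (fun A : ℕ => ((⌊(A : ℝ) * x + r * √A⌋₊ : ℝ) - A * x) / √A) atTop (𝓝 r) := by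
  have hsqrt : Tendsto (fun A : ℕ => √(A : ℝ)) atTop atTop :=
    tendsto_sqrt_atTop.comp tendsto_natCast_atTop_atTop
  have hnonneg : ∀ᶠ A : ℕ in atTop, 0 ≤ (A : ℝ) * x + r * √A := by
    filter_upwards [(hsqrt.atTop_mul_const hx).eventually_ge_atTop (-r)] with A hA
    have : (A : ℝ) * x + r * √A = √A * (√A * x + r) := by
      rw [mul_add, ← mul_assoc, mul_self_sqrt (Nat.cast_nonneg _)]
      ring
    rw [this]
    exact mul_nonneg (sqrt_nonneg _) (by linarith)
  have herr : Tendsto (fun A : ℕ =>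
      ((⌊(A : ℝ) * x + r * √A⌋₊ : ℝ) - (A * x + r * √A)) / √A) atTop (𝓝 0) := by
    refine squeeze_zero_norm' ?_ hsqrt.inv_tendsto_atTop
    filter_upwards [hnonneg] with A hA
    have h1 := Nat.floor_le hA
    have h2 := Nat.lt_floor_add_one ((A : ℝ) * x + r * √A)
    rw [norm_div, norm_of_nonneg (sqrt_nonneg _), div_eq_mul_inv]
    exact mul_le_of_le_one_left (inv_nonneg.2 (sqrt_nonneg _))
      (abs_le.2 ⟨by linarith, by linarith⟩)
  have h := herr.const_add r
  rw [add_zero] at h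
  refine h.congr' ?_
  filter_upwards [eventually_ne_atTop 0] with A hA
  have : 0 < √(A : ℝ) := sqrt_pos.2 (by positivity)
  field_simp
  ring

/-- Gaussian local limit theorem for the PS queue with `A` permanent customers:
`√(2πA)·E_A(⌊A x* + r√A⌋) → ((1−ρ)/√ρ)·exp(−(1−ρ)² r²/(2ρ))`. -/
theorem Estat_local_clt (ρ : ℝ) (hρ0 : 0 < ρ) (hρ1 : ρ < 1) (r : ℝ) :
    Tendsto
      (fun A : ℕ => Real.sqrt (2 * π * A) *
        Estat ρ A ⌊(A : ℝ) * (ρ / (1 - ρ)) + r * Real.sqrt A⌋₊)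
      atTop
      (𝓝 (((1 - ρ) / Real.sqrt ρ) * Real.exp (-((1 - ρ) ^ 2 * r ^ 2 / (2 * ρ))))) := by
  have hx : 0 < ρ / (1 - ρ) := div_pos hρ0 (sub_pos.2 hρ1)
  set n : ℕ → ℕ := fun A => ⌊(A : ℝ) * (ρ / (1 - ρ)) + r * √A⌋₊
  have hs := tendsto_floor_sub_div_sqrt hx r
  have hnA := tendsto_div_natCast_of_tendsto_sub_div_sqrt hs
  have hn : Tendsto n atTop atTop := by
    refine tendsto_natCast_atTop_iff.1
      ((hnA.pos_mul_atTop hx tendsto_natCast_atTop_atTop).congr' ?_)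
    filter_upwards [eventually_ne_atTop 0] with A hA
    exact div_mul_cancel₀ _ (Nat.cast_ne_zero.2 hA)
  have hstirling := (tendsto_stirlingSeq_sqrt_pi.comp
    (tendsto_atTop_mono (fun A => Nat.le_add_right (n A) A) hn)).div
    ((tendsto_stirlingSeq_sqrt_pi.comp hn).mul tendsto_stirlingSeq_sqrt_pi) (by positivity)
  have hroot := ((hnA.inv₀ hx.ne').const_add 1).sqrt
  have hexp := (tendsto_natCast_mul_comp_div (isLittleO_largeDevExponent hρ0 hρ1) hs).rexp
  have hlim : √π * (√π / (√π * √π)) * √(1 + (ρ / (1 - ρ))⁻¹) * (1 - ρ) *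
      exp (-(1 - ρ) ^ 2 / ρ / 2 * r ^ 2) =
      (1 - ρ) / √ρ * exp (-((1 - ρ) ^ 2 * r ^ 2 / (2 * ρ))) := by
    rw [inv_div, show 1 + (1 - ρ) / ρ = ρ⁻¹ by field_simp; ring, sqrt_inv]
    field_simp
  rw [← hlim]
  refine ((((hstirling.const_mul √π).mul hroot).mul_const (1 - ρ)).mul hexp).congr' ?_
  filter_upwards [eventually_ne_atTop 0, hn.eventually_ne_atTop 0] with A hA hnA
  exact (sqrt_two_pi_mul_Estat hρ0 hρ1 hA hnA).symm
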